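/- arXiv:2302.06113 — 2 statements merged into one kernel-verified Lean document; each statement's English description precedes it below -/
import Mathlib

section
/- Let h > 0, x₀ ∈ ℝ, x₁ = x₀ + h, and u₀, u₁ ∈ ℝ. For each ε > 0 let r_ε be the IMQ interpolant r_ε(x) = λ₀(ε)/√(1+ε²(x−x₀)²) + λ₁(ε)/√(1+ε²(x−x₁)²) with λ₀(ε) = ((1+ε²h²)/(ε²h²))·(u₀ − u₁/√(1+ε²h²)) and λ₁(ε) = ((1+ε²h²)/(ε²h²))·(u₁ − u₀/√(1+ε²h²)). Then the derivative r_ε′(x₀) tends to the forward difference (u₁ − u₀)/h as ε → 0⁺. -/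
/-!
At the left node `x₀` the basis function centred there is stationary, so `r_ε'(x₀)` only sees
the other one: with `s = √(1 + ε²h²)` it equals `λ₁ ε² h / s³ = (u₁ - u₀ / s) / (h s)`.
The blow-up `1/ε²` of the coefficient is exactly cancelled, and `s → 1` as `ε → 0`.
-/

open Filter Topology

theorem hasDerivAt_div_sqrt_one_add_sq (c ε a x : ℝ) :
    HasDerivAt (fun x => c / √(1 + ε^2*(x - a)^2))
      (-(c * ε^2 * (x - a)) / √(1 + ε^2*(x - a)^2) ^ 3) x := by
  have hq : 0 < 1 + ε^2*(x - a)^2 := by positivity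
  have hs : √(1 + ε^2*(x - a)^2) ≠ 0 := (Real.sqrt_pos.mpr hq).ne'
  have hinner : HasDerivAt (fun x => 1 + ε^2*(x - a)^2) (ε^2 * (2 * (x - a))) x := by
    simpa using ((((hasDerivAt_id x).sub_const a).fun_pow 2).const_mul (ε^2)).const_add 1
  refine ((hasDerivAt_const x c).fun_div (hinner.sqrt hq.ne') hs).congr_deriv ?_
  field_simp
  ring

theorem deriv_imq_pair_at_left_node (c₀ c₁ ε x₀ h : ℝ) :
    deriv (fun x => c₀ / √(1 + ε^2*(x - x₀)^2) + c₁ / √(1 + ε^2*(x - (x₀ + h))^2)) x₀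
      = c₁ * ε^2 * h / √(1 + ε^2*h^2) ^ 3 := by
  rw [((hasDerivAt_div_sqrt_one_add_sq c₀ ε x₀ x₀).fun_add
    (hasDerivAt_div_sqrt_one_add_sq c₁ ε (x₀ + h) x₀)).deriv]
  have hx : x₀ - (x₀ + h) = -h := by ring
  simp only [sub_self, hx, neg_sq]
  ring

theorem tendsto_sub_div_sqrt_one_add_sq_div_mul (h u₀ u₁ : ℝ) (hh : h ≠ 0) :
    Tendsto (fun ε : ℝ => (u₁ - u₀ / √(1 + ε^2*h^2)) / (h * √(1 + ε^2*h^2)))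
      (𝓝 0) (𝓝 ((u₁ - u₀) / h)) := by
  have hs : Tendsto (fun ε : ℝ => √(1 + ε^2*h^2)) (𝓝 0) (𝓝 1) := by
    have hcont : Continuous (fun ε : ℝ => √(1 + ε^2*h^2)) := by fun_prop
    simpa using hcont.tendsto 0
  have hlim : Tendsto (fun ε : ℝ => (u₁ - u₀ / √(1 + ε^2*h^2)) / (h * √(1 + ε^2*h^2)))
      (𝓝 0) (𝓝 ((u₁ - u₀ / 1) / (h * 1))) :=
    (tendsto_const_nhds.sub (tendsto_const_nhds.div hs one_ne_zero)).div
      (tendsto_const_nhds.mul hs) (by simpa using hh)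
  simpa using hlim

/-- As ε → 0⁺, the derivative of the two-node IMQ interpolant at x₀
tends to the forward difference (u₁ − u₀)/h. -/
theorem imq_two_point_deriv_tendsto_forward_difference
    (h x₀ u₀ u₁ : ℝ) (hh : 0 < h) (x₁ : ℝ) (hx₁ : x₁ = x₀ + h) :
    Filter.Tendsto
      (fun ε : ℝ =>
        deriv (fun x =>
          (((1 + ε^2*h^2)/(ε^2*h^2)) * (u₀ - u₁ / Real.sqrt (1 + ε^2*h^2)))
            / Real.sqrt (1 + ε^2*(x - x₀)^2)
          + (((1 + ε^2*h^2)/(ε^2*h^2)) * (u₁ - u₀ / Real.sqrt (1 + ε^2*h^2)))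
            / Real.sqrt (1 + ε^2*(x - x₁)^2)) x₀)
      (𝓝[>] 0) (𝓝 ((u₁ - u₀) / h)) := by
  subst hx₁
  refine ((tendsto_sub_div_sqrt_one_add_sq_div_mul h u₀ u₁ hh.ne').mono_left
    nhdsWithin_le_nhds).congr' ?_
  filter_upwards [self_mem_nhdsWithin] with ε (hε : 0 < ε)
  rw [deriv_imq_pair_at_left_node]
  have hs : √(1 + ε^2*h^2) ^ 2 = 1 + ε^2*h^2 := Real.sq_sqrt (by positivity)
  have hs0 : √(1 + ε^2*h^2) ≠ 0 := (Real.sqrt_pos.mpr (by positivity)).ne'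
  field_simp
  rw [hs]
end

section
/- Let h > 0 and ε > 0 be real numbers, x₀ ∈ ℝ, x₁ = x₀ + h, x₂ = x₀ + 2h, and u₀, u₁, u₂ ∈ ℝ. Suppose λ₀, λ₁, λ₂ ∈ ℝ are such that the IQ interpolant r(x) = λ₀/(1+ε²(x−x₀)²) + λ₁/(1+ε²(x−x₁)²) + λ₂/(1+ε²(x−x₂)²) satisfies r(x_k) = u_k for k = 0, 1, 2. Then the derivative of r at the middle node satisfies r′(x₁) = ((1+4ε²h²)/(2h·(1+ε²h²)²))·(u₂ − u₀). -/
/-! The middle basis function is symmetric about x₁, so it contributes neither to r′(x₁) nor to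
u₂ − u₀, while the outer two contribute with opposite signs. Hence both r′(x₁) and u₂ − u₀ are
multiples of λ₂ − λ₀, and the formula is the ratio of the two multipliers. -/

theorem hasDerivAt_div_one_add_sq_mul_sub_sq (l ε c x : ℝ) :
    HasDerivAt (fun x => l / (1 + ε^2*(x - c)^2))
      (-(2 * l * ε^2 * (x - c)) / (1 + ε^2*(x - c)^2)^2) x := by
  have hden : HasDerivAt (fun x => 1 + ε^2*(x - c)^2) (ε^2 * (2 * (x - c))) x := by
    simpa using (((hasDerivAt_id x).sub_const c).fun_pow 2).const_mul (ε^2) |>.const_add 1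
  exact ((hasDerivAt_const x l).fun_div hden (by positivity)).congr_deriv (by ring)

theorem iq_three_point_deriv_middle_general
    (h ε x₀ u₀ u₂ : ℝ)
    (x₁ x₂ : ℝ) (hx₁ : x₁ = x₀ + h) (hx₂ : x₂ = x₀ + 2*h)
    (l₀ l₁ l₂ : ℝ) (r : ℝ → ℝ)
    (hr : r = fun x => l₀ / (1 + ε^2*(x - x₀)^2)
      + l₁ / (1 + ε^2*(x - x₁)^2)
      + l₂ / (1 + ε^2*(x - x₂)^2))
    (h0 : r x₀ = u₀) (h2 : r x₂ = u₂) :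
    deriv r x₁ = ((1 + 4*ε^2*h^2) / (2*h*(1 + ε^2*h^2)^2)) * (u₂ - u₀) := by
  have hslope : deriv r x₁ = 2 * ε^2 * h * (l₂ - l₀) / (1 + ε^2*h^2)^2 := by
    subst hr hx₁ hx₂
    refine (((hasDerivAt_div_one_add_sq_mul_sub_sq l₀ ε x₀ _).add
      (hasDerivAt_div_one_add_sq_mul_sub_sq l₁ ε _ _)).add
      (hasDerivAt_div_one_add_sq_mul_sub_sq l₂ ε _ _)).deriv.trans ?_
    ring_nf
  have hjump : u₂ - u₀ = 4 * ε^2 * h^2 * (l₂ - l₀) / (1 + 4*ε^2*h^2) := by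
    subst hr hx₁ hx₂ h0 h2
    field_simp
    ring
  rw [hslope, hjump]
  rcases eq_or_ne h 0 with rfl | hh
  · simp -- both sides vanish, the right one through division by zero
  field_simp
  ring

/-- Derivative of the three-node IQ interpolant at the middle node. -/
theorem iq_three_point_deriv_middle
    (h ε x₀ u₀ u₁ u₂ : ℝ) (hh : 0 < h) (hε : 0 < ε)
    (x₁ x₂ : ℝ) (hx₁ : x₁ = x₀ + h) (hx₂ : x₂ = x₀ + 2*h)
    (l₀ l₁ l₂ : ℝ) (r : ℝ → ℝ)
    (hr : r = fun x => l₀ / (1 + ε^2*(x - x₀)^2)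
      + l₁ / (1 + ε^2*(x - x₁)^2)
      + l₂ / (1 + ε^2*(x - x₂)^2))
    (h0 : r x₀ = u₀) (h1 : r x₁ = u₁) (h2 : r x₂ = u₂) :
    deriv r x₁ = ((1 + 4*ε^2*h^2) / (2*h*(1 + ε^2*h^2)^2)) * (u₂ - u₀) :=
  iq_three_point_deriv_middle_general h ε x₀ u₀ u₂ x₁ x₂ hx₁ hx₂ l₀ l₁ l₂ r hr h0 h2
end
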